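/- For each r ≥ 0, the element (a_{N-1} a_{N-2} ⋯ a_2 a_1)^r = a_{N-1}^r a_{N-2}^r ⋯ a_2^r a_1^r lies in the center of the partic algebra PP_N, i.e. it commutes with every generator a_i. -/
import Mathlib


inductive ParticRel (K : Type*) [CommRing K] (N : ℕ) :
    FreeAlgebra K (Fin (N - 1)) → FreeAlgebra K (Fin (N - 1)) → Prop
  | plac1 : ∀ i j : Fin (N - 1), (i : ℕ) = (j : ℕ) + 1 →
      ParticRel K N (FreeAlgebra.ι K i * FreeAlgebra.ι K j * FreeAlgebra.ι K i)
        (FreeAlgebra.ι K i * FreeAlgebra.ι K i * FreeAlgebra.ι K j)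
  | plac2 : ∀ i j : Fin (N - 1), (j : ℕ) = (i : ℕ) + 1 →
      ParticRel K N (FreeAlgebra.ι K i * FreeAlgebra.ι K j * FreeAlgebra.ι K i)
        (FreeAlgebra.ι K j * FreeAlgebra.ι K i * FreeAlgebra.ι K i)
  | comm : ∀ i j : Fin (N - 1), (i : ℕ) + 1 < (j : ℕ) →
      ParticRel K N (FreeAlgebra.ι K i * FreeAlgebra.ι K j)
        (FreeAlgebra.ι K j * FreeAlgebra.ι K i)
  | partic : ∀ lo mid hi : Fin (N - 1), (mid : ℕ) = (lo : ℕ) + 1 → (hi : ℕ) = (mid : ℕ) + 1 →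
      ParticRel K N
        (FreeAlgebra.ι K mid * FreeAlgebra.ι K lo * FreeAlgebra.ι K hi * FreeAlgebra.ι K mid)
        (FreeAlgebra.ι K hi * FreeAlgebra.ι K mid * FreeAlgebra.ι K lo * FreeAlgebra.ι K mid)

/-- The partic algebra `PP_N`, with generators `a_1, …, a_{N-1}`. -/
abbrev ParticAlgebra (K : Type*) [CommRing K] (N : ℕ) := RingQuot (ParticRel K N)

/-- The generator `a_i` of the partic algebra, for `1 ≤ i ≤ N-1` (junk value `0`
outside that range). -/
noncomputable def ppa (K : Type*) [CommRing K] (N : ℕ) (i : ℕ) : ParticAlgebra K N :=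
  if h : 1 ≤ i ∧ i ≤ N - 1 then
    RingQuot.mkAlgHom K (ParticRel K N) (FreeAlgebra.ι K ⟨i - 1, by omega⟩) else 0

/-- The element `a_{N-1}^r a_{N-2}^r ⋯ a_2^r a_1^r` of the partic algebra. -/
noncomputable def stairPow (K : Type*) [CommRing K] (N r : ℕ) : ParticAlgebra K N :=
  ((List.range (N - 1)).map fun t => ppa K N (N - 1 - t) ^ r).prod

section Aux
variable (K : Type*) [CommRing K] (N : ℕ)

lemma ppa_def (i : ℕ) (h1 : 1 ≤ i) (h2 : i ≤ N - 1) :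
    ppa K N i = RingQuot.mkAlgHom K (ParticRel K N) (FreeAlgebra.ι K ⟨i - 1, by omega⟩) :=
  dif_pos ⟨h1, h2⟩

lemma ppa_r1 (i : ℕ) (h1 : 2 ≤ i) (h2 : i ≤ N - 1) :
    ppa K N i * ppa K N (i-1) * ppa K N i = ppa K N i * ppa K N i * ppa K N (i-1) := by
  rw [ppa_def K N i (by omega) h2, ppa_def K N (i-1) (by omega) (by omega)]
  have h := RingQuot.mkAlgHom_rel K
    (ParticRel.plac1 (K := K) (N := N) ⟨i-1, by omega⟩ ⟨i-1-1, by omega⟩ (by simp; omega))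
  simpa only [map_mul] using h

lemma ppa_r2 (i : ℕ) (h1 : 1 ≤ i) (h2 : i + 1 ≤ N - 1) :
    ppa K N i * ppa K N (i+1) * ppa K N i = ppa K N (i+1) * ppa K N i * ppa K N i := by
  rw [ppa_def K N i (by omega) (by omega), ppa_def K N (i+1) (by omega) h2]
  have h := RingQuot.mkAlgHom_rel K
    (ParticRel.plac2 (K := K) (N := N) ⟨i-1, by omega⟩ ⟨i+1-1, by omega⟩ (by simp; omega))
  simpa only [map_mul] using h

lemma ppa_comm (i j : ℕ) (h1 : 1 ≤ i) (hij : i + 1 < j) (hj : j ≤ N - 1) :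
    Commute (ppa K N i) (ppa K N j) := by
  rw [Commute, SemiconjBy, ppa_def K N i (by omega) (by omega), ppa_def K N j (by omega) hj]
  have h := RingQuot.mkAlgHom_rel K
    (ParticRel.comm (K := K) (N := N) ⟨i-1, by omega⟩ ⟨j-1, by omega⟩ (by simp; omega))
  simpa only [map_mul] using h

end Aux

section Aux2
variable (K : Type*) [CommRing K] (N : ℕ)

-- a_i a_{i-1} a_i^r = a_i^{r+1} a_{i-1}
lemma ppa_pow1 (i : ℕ) (h1 : 2 ≤ i) (h2 : i ≤ N - 1) (r : ℕ) :
    ppa K N i * ppa K N (i-1) * ppa K N i ^ r = ppa K N i ^ (r+1) * ppa K N (i-1) := by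
  set a := ppa K N i with ha
  set b := ppa K N (i-1) with hb
  induction r with
  | zero => simp [pow_succ]
  | succ r ih =>
    calc a * b * a ^ (r+1) = (a * b * a) * a ^ r := by rw [pow_succ']; noncomm_ring
      _ = (a * a * b) * a ^ r := by rw [ppa_r1 K N i h1 h2]
      _ = a * (a * b * a ^ r) := by noncomm_ring
      _ = a * (a ^ (r+1) * b) := by rw [ih]
      _ = a ^ (r+2) * b := by rw [pow_succ' a (r+1)]; noncomm_ring

noncomputable def Tst (r : ℕ) : ℕ → ParticAlgebra K N
  | 0 => 1
  | j+1 => ppa K N (j+1) ^ r * Tst r j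

lemma Tst_zero : ∀ j, Tst K N 0 j = 1 := by
  intro j; induction j with
  | zero => rfl
  | succ j ih => rw [Tst, ih]; simp

lemma ppa_commute_Tst (i : ℕ) (hi : i ≤ N - 1) :
    ∀ m, m + 2 ≤ i → Commute (ppa K N i) (Tst K N 1 m) := by
  intro m
  induction m with
  | zero => intro _; exact Commute.one_right _
  | succ m ih =>
    intro hm
    rw [Tst]
    exact Commute.mul_right (by simpa using (ppa_comm K N (m+1) i (by omega) (by omega) hi).symm)
      (ih (by omega))

lemma Tst_succ (r j : ℕ) : Tst K N r (j+1) = ppa K N (j+1) ^ r * Tst K N r j := rfl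

lemma Tst_mul (j : ℕ) (hj : j ≤ N - 1) (r : ℕ) :
    Tst K N 1 j * Tst K N r j = Tst K N (r+1) j := by
  induction j with
  | zero => simp [Tst]
  | succ j ih =>
    match j, ih with
    | 0, _ =>
      show (ppa K N 1 ^ 1 * 1) * (ppa K N 1 ^ r * 1) = ppa K N 1 ^ (r+1) * 1
      rw [pow_one, mul_one, mul_one, mul_one, pow_succ']
    | m+1, ih =>
      have hcomm : Commute (ppa K N (m+2) ^ r) (Tst K N 1 m) :=
        ((ppa_commute_Tst K N (m+2) hj m (by omega)).pow_left r)
      have hp : ppa K N (m+2) * ppa K N (m+1) * ppa K N (m+2) ^ r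
          = ppa K N (m+2) ^ (r+1) * ppa K N (m+1) := by
        have := ppa_pow1 K N (m+2) (by omega) hj r
        simpa using this
      have ihm := ih (by omega)
      simp only [Tst_succ, pow_one] at ihm ⊢
      calc ppa K N (m+2) * (ppa K N (m+1) * Tst K N 1 m) *
              (ppa K N (m+2) ^ r * (ppa K N (m+1) ^ r * Tst K N r m))
          = ppa K N (m+2) * ppa K N (m+1) * (Tst K N 1 m * ppa K N (m+2) ^ r) *
              (ppa K N (m+1) ^ r * Tst K N r m) := by noncomm_ring
        _ = ppa K N (m+2) * ppa K N (m+1) * (ppa K N (m+2) ^ r * Tst K N 1 m) *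
              (ppa K N (m+1) ^ r * Tst K N r m) := by rw [hcomm.symm.eq]
        _ = (ppa K N (m+2) * ppa K N (m+1) * ppa K N (m+2) ^ r) *
              (Tst K N 1 m * (ppa K N (m+1) ^ r * Tst K N r m)) := by
              noncomm_ring
        _ = (ppa K N (m+2) ^ (r+1) * ppa K N (m+1)) *
              (Tst K N 1 m * (ppa K N (m+1) ^ r * Tst K N r m)) := by
              rw [hp]
        _ = ppa K N (m+2) ^ (r+1) *
              ((ppa K N (m+1) * Tst K N 1 m) * (ppa K N (m+1) ^ r * Tst K N r m)) := by
              noncomm_ring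
        _ = ppa K N (m+2) ^ (r+1) * (ppa K N (m+1) ^ (r+1) * Tst K N (r+1) m) := by rw [ihm]

lemma Tst_pow (j : ℕ) (hj : j ≤ N - 1) (r : ℕ) :
    Tst K N r j = (Tst K N 1 j) ^ r := by
  induction r with
  | zero => rw [pow_zero, Tst_zero]
  | succ r ih => rw [pow_succ', ← ih, Tst_mul K N j hj r]

end Aux2

section Aux3
variable (K : Type*) [CommRing K] (N : ℕ)

lemma Tst_zero' (r : ℕ) : Tst K N r 0 = 1 := rfl

lemma ppa_central : ∀ j, j ≤ N - 1 → ∀ i, 1 ≤ i → i ≤ j →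
    ppa K N i * Tst K N 1 j = Tst K N 1 j * ppa K N i := by
  intro j
  induction j with
  | zero => intro _ i h1 h2; omega
  | succ j ih =>
    intro hj i h1 h2
    rcases Nat.lt_trichotomy i j with hlt | rfl | hgt
    · -- i < j : commute with head, use IH
      have hc : Commute (ppa K N i) (ppa K N (j+1)) :=
        ppa_comm K N i (j+1) h1 (by omega) hj
      have ihm := ih (by omega) i h1 (by omega)
      simp only [Tst_succ, pow_one]
      calc ppa K N i * (ppa K N (j+1) * Tst K N 1 j)
          = ppa K N (j+1) * (ppa K N i * Tst K N 1 j) := by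
            rw [← mul_assoc, hc.eq, mul_assoc]
        _ = ppa K N (j+1) * (Tst K N 1 j * ppa K N i) := by rw [ihm]
        _ = ppa K N (j+1) * Tst K N 1 j * ppa K N i := by rw [mul_assoc]
    · -- i = j
      obtain ⟨m, rfl⟩ : ∃ m, i = m + 1 := ⟨i - 1, by omega⟩
      have hr2 := ppa_r2 K N (m+1) (by omega) (by omega)
      have ihm := ih (by omega) (m+1) (by omega) le_rfl
      simp only [Tst_succ, pow_one] at ihm ⊢
      calc ppa K N (m+1) * (ppa K N (m+2) * (ppa K N (m+1) * Tst K N 1 m))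
          = (ppa K N (m+1) * ppa K N (m+2) * ppa K N (m+1)) * Tst K N 1 m := by noncomm_ring
        _ = (ppa K N (m+2) * ppa K N (m+1) * ppa K N (m+1)) * Tst K N 1 m := by rw [hr2]
        _ = ppa K N (m+2) * (ppa K N (m+1) * (ppa K N (m+1) * Tst K N 1 m)) := by noncomm_ring
        _ = ppa K N (m+2) * ((ppa K N (m+1) * Tst K N 1 m) * ppa K N (m+1)) := by rw [ihm]
        _ = ppa K N (m+2) * (ppa K N (m+1) * Tst K N 1 m) * ppa K N (m+1) := by noncomm_ring
    · -- i = j + 1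
      have hij : i = j + 1 := by omega
      subst hij
      match j, hj, h1 with
      | 0, hj, _ =>
        simp only [Tst_succ, pow_one, Tst_zero']
        noncomm_ring
      | m+1, hj, _ =>
        have hcm : Commute (ppa K N (m+2)) (Tst K N 1 m) :=
          ppa_commute_Tst K N (m+2) hj m le_rfl
        have hr1 : ppa K N (m+2) * ppa K N (m+1) * ppa K N (m+2)
            = ppa K N (m+2) * ppa K N (m+2) * ppa K N (m+1) := by
          have := ppa_r1 K N (m+2) (by omega) hj
          simpa using this
        simp only [Tst_succ, pow_one, Tst_zero']
        calc ppa K N (m+2) * (ppa K N (m+2) * (ppa K N (m+1) * Tst K N 1 m))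
            = (ppa K N (m+2) * ppa K N (m+2) * ppa K N (m+1)) * Tst K N 1 m := by noncomm_ring
          _ = (ppa K N (m+2) * ppa K N (m+1) * ppa K N (m+2)) * Tst K N 1 m := by rw [hr1]
          _ = (ppa K N (m+2) * ppa K N (m+1)) * (ppa K N (m+2) * Tst K N 1 m) := by noncomm_ring
          _ = (ppa K N (m+2) * ppa K N (m+1)) * (Tst K N 1 m * ppa K N (m+2)) := by rw [hcm.eq]
          _ = ppa K N (m+2) * (ppa K N (m+1) * Tst K N 1 m) * ppa K N (m+2) := by noncomm_ring

lemma stair_eq_aux (r : ℕ) : ∀ j, ((List.range j).map fun t => ppa K N (j - t) ^ r).prod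
    = Tst K N r j := by
  intro j
  induction j with
  | zero => rfl
  | succ j ih =>
    have hmap : ((List.range (j+1)).map fun t => ppa K N (j+1-t) ^ r)
        = (ppa K N (j+1) ^ r) :: ((List.range j).map fun t => ppa K N (j-t) ^ r) := by
      rw [List.range_succ_eq_map, List.map_cons, List.map_map]
      congr 1
      exact List.map_congr_left fun t _ => by simp [Nat.succ_sub_succ]
    rw [hmap, List.prod_cons, ih, Tst_succ]

end Aux3

/-- For each `r ≥ 0`, `(a_{N-1} ⋯ a_1)^r = a_{N-1}^r ⋯ a_1^r` is central in the partic
algebra: it commutes with every generator. -/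
theorem stmt14 (K : Type*) [Field K] (N : ℕ) (hN : 3 ≤ N) (r : ℕ) :
    stairPow K N r = (stairPow K N 1) ^ r ∧
      ∀ i : ℕ, 1 ≤ i → i ≤ N - 1 →
        ppa K N i * stairPow K N r = stairPow K N r * ppa K N i := by
  have se : ∀ s, stairPow K N s = Tst K N s (N - 1) := fun s => stair_eq_aux K N s (N - 1)
  constructor
  · rw [se r, se 1]
    exact Tst_pow K N (N - 1) le_rfl r
  · intro i h1 h2
    have hc : Commute (ppa K N i) (Tst K N 1 (N - 1)) :=
      ppa_central K N (N - 1) le_rfl i h1 h2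
    rw [se r, Tst_pow K N (N - 1) le_rfl r]
    exact (hc.pow_right r).eq
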